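/- arXiv:2405.18273 — 2 statements merged into one kernel-verified Lean document; each statement's English description precedes it below -/
import Mathlib

section
/- Fix n ≥ 1 and d = 2, let β ≥ n²/π², let φ(t) = e^{βt}/β, and let the graph W be connected. If X ∈ ℝ^{2×n} with unit-norm columns is critical for f and has negative-semidefinite Hessian, then all columns of X are equal: x_1 = ⋯ = x_n. -/
open Matrix

noncomputable section

/-- Frobenius inner product `⟨A,B⟩ = ∑ᵢⱼ Aᵢⱼ Bᵢⱼ`. -/
def frob {ι κ : Type*} [Fintype ι] [Fintype κ] (A B : Matrix ι κ ℝ) : ℝ :=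
  ∑ i, ∑ j, A i j * B i j

/-- `ddiag` zeroes out all off-diagonal entries of a square matrix. -/
def ddiag {ι : Type*} [Fintype ι] [DecidableEq ι] (M : Matrix ι ι ℝ) : Matrix ι ι ℝ :=
  Matrix.diagonal fun i => M i i

/-- Graph Laplacian `L(M) = diag(M 1) − M`. -/
def lap {ι : Type*} [Fintype ι] [DecidableEq ι] (M : Matrix ι ι ℝ) : Matrix ι ι ℝ :=
  Matrix.diagonal (fun i => ∑ j, M i j) - M

/-- `X` has unit-norm columns. -/
def unitCols {d : ℕ} {ι : Type*} [Fintype ι] (X : Matrix (Fin d) ι ℝ) : Prop :=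
  ∀ j, ∑ i, X i j ^ 2 = 1

/-- `A = W ⊙ φ'(XᵀX)` (`d1` playing the role of `φ'`). -/
def Amat {d : ℕ} {ι : Type*} [Fintype ι] (W : Matrix ι ι ℝ) (X : Matrix (Fin d) ι ℝ)
    (d1 : ℝ → ℝ) : Matrix ι ι ℝ :=
  Matrix.hadamard W ((Xᵀ * X).map d1)

/-- `S = ddiag(XᵀXA) − A`. -/
def Smat {d : ℕ} {ι : Type*} [Fintype ι] [DecidableEq ι] (W : Matrix ι ι ℝ)
    (X : Matrix (Fin d) ι ℝ) (d1 : ℝ → ℝ) : Matrix ι ι ℝ :=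
  ddiag ((Xᵀ * X) * Amat W X d1) - Amat W X d1

/-- First-order criticality: `X S = 0`, i.e. `X·ddiag(XᵀXA) = XA`
(vanishing Riemannian gradient on the product of spheres). -/
def IsCritical {d : ℕ} {ι : Type*} [Fintype ι] [DecidableEq ι] (W : Matrix ι ι ℝ)
    (X : Matrix (Fin d) ι ℝ) (d1 : ℝ → ℝ) : Prop :=
  X * Smat W X d1 = 0

/-- The Riemannian Hessian quadratic form of `f` at `X` is negative semidefinite:
`−⟨ẊᵀẊ, S⟩ + (1/2)⟨(XᵀẊ + ẊᵀX)^{⊙2}, W ⊙ φ''(XᵀX)⟩ ≤ 0` for all tangent `Ẋ`. -/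
def HessNegSemidef {d : ℕ} {ι : Type*} [Fintype ι] [DecidableEq ι] (W : Matrix ι ι ℝ)
    (X : Matrix (Fin d) ι ℝ) (d1 d2 : ℝ → ℝ) : Prop :=
  ∀ V : Matrix (Fin d) ι ℝ, (∀ j, (Xᵀ * V) j j = 0) →
    -(frob (Vᵀ * V) (Smat W X d1))
      + (1 / 2) * frob ((Xᵀ * V + Vᵀ * X).map fun t => t ^ 2)
          (Matrix.hadamard W ((Xᵀ * X).map d2)) ≤ 0

/-- The graph with an edge `{i,j}` whenever `w_ij > 0` is connected. -/
def ConnectedW {ι : Type*} (W : Matrix ι ι ℝ) : Prop :=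
  (SimpleGraph.fromRel fun i j => 0 < W i j).Connected

/-- `f(Y) = (1/2)⟨W, φ(YᵀY)⟩`. -/
def fval {d : ℕ} {ι : Type*} [Fintype ι] (W : Matrix ι ι ℝ) (φ : ℝ → ℝ)
    (Y : Matrix (Fin d) ι ℝ) : ℝ :=
  (1 / 2) * frob W ((Yᵀ * Y).map φ)

/-- `h(t) = tφ'(t) − (1−t²)φ''(t)`. -/
def hfun (d1 d2 : ℝ → ℝ) (t : ℝ) : ℝ := t * d1 t - (1 - t ^ 2) * d2 t

/-- The matrix `M` with `m_ij = w_ij · h(x_iᵀx_j)`. -/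
def Mmat {d : ℕ} {ι : Type*} [Fintype ι] (W : Matrix ι ι ℝ) (X : Matrix (Fin d) ι ℝ)
    (d1 d2 : ℝ → ℝ) : Matrix ι ι ℝ :=
  Matrix.of fun i j => W i j * hfun d1 d2 ((Xᵀ * X) i j)

/-- The kernel of `L` is exactly `span(1)`. -/
def KernelIsConst {ι : Type*} [Fintype ι] [DecidableEq ι] (L : Matrix ι ι ℝ) : Prop :=
  ∀ α : ι → ℝ, L.mulVec α = 0 ↔ ∃ c : ℝ, ∀ k, α k = c

/-- The regular `n`-gon configuration on the unit circle. -/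
def ngon (n : ℕ) : Matrix (Fin 2) (Fin n) ℝ :=
  Matrix.of fun a j =>
    if a = 0 then Real.cos (2 * Real.pi * (j : ℝ) / (n : ℝ))
    else Real.sin (2 * Real.pi * (j : ℝ) / (n : ℝ))

/-- The log-sum-exp smoothing `φ_{ε,τ}(t) = ε·log(1 + e^{(t−τ)/ε})` of the ReLU. -/
def philse (ε τ : ℝ) : ℝ → ℝ := fun t => ε * Real.log (1 + Real.exp ((t - τ) / ε))


/-!
Write `xⱼ = (cos θⱼ, sin θⱼ)`. In the tangent direction `ẋⱼ = aⱼ xⱼ^⊥` the Hessian form is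
`-½ ∑ (aᵢ - aⱼ)² wᵢⱼ e^{β cos θᵢⱼ} (cos θᵢⱼ - β sin² θᵢⱼ)`, so evaluating it at the indicator of a
set of vertices shows that the edges with `cos θᵢⱼ ≥ β sin² θᵢⱼ` still connect the graph. For
`β ≥ n²/π²` these edges join points at circular distance `< π/n` (Taylor bounds on `sin`), so along
a spanning tree of them the angles lift to reals of spread `< (n - 1) π/n < π`: all points lie on
an open half circle. At the extreme point of that arc every term of the first-order condition
`∑ⱼ wᵢⱼ e^{β cos θᵢⱼ} sin(θⱼ - θᵢ) = 0` has the same sign, so its neighbours coincide with it,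
and by connectivity all points coincide.
-/

open Real

namespace Real

theorem cos_sub_comm (x y : ℝ) : cos (x - y) = cos (y - x) := by
  rw [← cos_neg, neg_sub]

theorem sq_mul_cos_lt_sin_sq {s : ℝ} (hs₀ : 0 < s) (hs₂ : s ≤ 2) : s ^ 2 * cos s < sin s ^ 2 := by
  have hs4 : s ^ 2 ≤ 4 := by nlinarith
  have hhalf : (s / 2 - (s / 2) ^ 3 / 6) ^ 2 ≤ sin (s / 2) ^ 2 :=
    pow_le_pow_left₀ (by nlinarith) (sin_ge_sub_cube (by positivity)) 2
  have hsin : (s - s ^ 3 / 6) ^ 2 < sin s ^ 2 :=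
    pow_lt_pow_left₀ (sin_gt_sub_cube hs₀) (by nlinarith) two_ne_zero
  have hcos : cos s = 1 - 2 * sin (s / 2) ^ 2 := by
    have := cos_two_mul (s / 2)
    rw [mul_div_cancel₀ s two_ne_zero] at this
    linarith [sin_sq_add_cos_sq (s / 2)]
  have hpoly : (s - s ^ 3 / 6) ^ 2 - s ^ 2 * (1 - 2 * (s / 2 - (s / 2) ^ 3 / 6) ^ 2)
      = s ^ 4 * (1 / 6 - s ^ 2 / 72) + s ^ 8 / 1152 := by ring
  have : 0 ≤ s ^ 4 * (1 / 6 - s ^ 2 / 72) + s ^ 8 / 1152 :=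
    add_nonneg (mul_nonneg (by positivity) (by linarith)) (by positivity)
  rw [hcos]
  nlinarith

theorem cos_lt_mul_sin_sq {δ β u : ℝ} (hδ : 0 < δ) (hβ : 1 / δ ^ 2 ≤ β) (hδu : δ ≤ |u|)
    (huπ : |u| ≤ π) : cos u < β * sin u ^ 2 := by
  have hβ₀ : 0 < β := lt_of_lt_of_le (by positivity) hβ
  obtain ⟨v, hvu, hv⟩ : ∃ v, δ ≤ v ∧ v ≤ π ∧ cos v = cos u ∧ sin v ^ 2 = sin u ^ 2 := by
    refine ⟨|u|, hδu, huπ, cos_abs u, ?_⟩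
    rcases abs_choice u with h | h <;> simp [h]
  rcases hv with ⟨hvπ, hcos, hsin⟩
  rw [← hcos, ← hsin]
  rcases le_or_gt v (π / 2) with hv2 | hv2
  · have hδ2 : δ ≤ 2 := by linarith [pi_le_four]
    have hsinδ : 0 < sin δ := sin_pos_of_pos_of_lt_pi hδ (by linarith [pi_pos])
    calc cos v ≤ cos δ := cos_le_cos_of_nonneg_of_le_pi hδ.le hvπ hvu
      _ < 1 / δ ^ 2 * sin δ ^ 2 := by
        rw [div_mul_eq_mul_div, one_mul, lt_div_iff₀ (by positivity), mul_comm]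
        exact sq_mul_cos_lt_sin_sq hδ hδ2
      _ ≤ β * sin v ^ 2 := by
        gcongr
        exact sin_le_sin_of_le_of_le_pi_div_two (by linarith [pi_pos]) hv2 hvu
  · have : cos v < 0 := cos_neg_of_pi_div_two_lt_of_lt hv2 (by linarith [pi_pos])
    have : 0 ≤ β * sin v ^ 2 := by positivity
    linarith

theorem exists_abs_add_int_mul_two_pi_lt {δ β u : ℝ} (hδ : 0 < δ) (hβ : 1 / δ ^ 2 ≤ β)
    (h : β * sin u ^ 2 ≤ cos u) : ∃ m : ℤ, |u + m * (2 * π)| < δ := by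
  set k := toIocDiv two_pi_pos (-π) u
  have hv : u + (-k : ℤ) * (2 * π) = toIocMod two_pi_pos (-π) u := by
    rw [← self_sub_toIocDiv_zsmul, zsmul_eq_mul]; push_cast; ring
  obtain ⟨hlo, hhi⟩ := toIocMod_mem_Ioc two_pi_pos (-π) u
  refine ⟨-k, ?_⟩
  by_contra hδv
  have := cos_lt_mul_sin_sq hδ hβ (not_lt.1 hδv) (abs_le.2 ⟨by linarith, by linarith⟩)
  rw [cos_add_int_mul_two_pi, sin_add_int_mul_two_pi] at this
  linarith

theorem exists_cos_sin_eq {x y : ℝ} (h : x ^ 2 + y ^ 2 = 1) : ∃ θ, cos θ = x ∧ sin θ = y := by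
  obtain ⟨θ, hθ⟩ := (Complex.norm_eq_one_iff ⟨x, y⟩).1 (by
    rw [Complex.norm_def, Complex.normSq_mk, ← sq, ← sq, h, Real.sqrt_one])
  exact ⟨θ, by simpa using congrArg Complex.re hθ, by simpa using congrArg Complex.im hθ⟩

end Real

namespace SimpleGraph

variable {V : Type*} {G : SimpleGraph V}

theorem fromRel_adj_iff_of_symm {r : V → V → Prop} (hr : ∀ i j, r i j → r j i) {v w : V} :
    (fromRel r).Adj v w ↔ v ≠ w ∧ r v w := by
  rw [fromRel_adj]
  exact and_congr_right fun _ => or_iff_left_of_imp (hr w v)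

theorem Connected.exists_adj_of_mem_of_notMem (hG : G.Connected) {S : Set V} {u v : V}
    (hu : u ∈ S) (hv : v ∉ S) : ∃ x ∈ S, ∃ y ∉ S, G.Adj x y := by
  obtain ⟨d, -, hd, hd'⟩ := (hG.preconnected u v).some.exists_boundary_dart S hu hv
  exact ⟨d.fst, hd, d.snd, hd', d.adj⟩

theorem Connected.mem_of_forall_adj_mem (hG : G.Connected) {S : Set V} {u : V} (hu : u ∈ S)
    (hS : ∀ x ∈ S, ∀ y, G.Adj x y → y ∈ S) (v : V) : v ∈ S := by
  by_contra hv
  obtain ⟨x, hx, y, hy, hxy⟩ := hG.exists_adj_of_mem_of_notMem hu hv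
  exact hy (hS x hx y hxy)

/-- Cut argument: the form is negative at the indicator of a component of the nonnegative
edges that is not everything. -/
theorem Connected.connected_fromRel_nonneg [Fintype V] (hG : G.Connected) {M : V → V → ℝ}
    (hM : ∀ i j, i ≠ j → ¬ G.Adj i j → M i j = 0)
    (hpsd : ∀ a : V → ℝ, 0 ≤ ∑ i, ∑ j, (a i - a j) ^ 2 * M i j) :
    (fromRel fun i j => G.Adj i j ∧ 0 ≤ M i j).Connected := by
  classical
  set E := fromRel fun i j => G.Adj i j ∧ 0 ≤ M i j
  have := hG.nonempty
  refine (connected_iff E).2 ⟨fun u v => ?_, inferInstance⟩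
  by_contra huv
  obtain ⟨x, hx, y, hy, hxy⟩ :=
    hG.exists_adj_of_mem_of_notMem (S := {w | E.Reachable u w}) (Reachable.refl u) huv
  set a : V → ℝ := fun k => if E.Reachable u k then 1 else 0
  have hsame : ∀ i j, G.Adj i j → 0 ≤ M i j → (E.Reachable u i ↔ E.Reachable u j) := by
    intro i j hij hMij
    have hE : E.Adj i j := by simpa [E] using ⟨hij.ne, Or.inl ⟨hij, hMij⟩⟩
    exact ⟨fun h => h.trans hE.reachable, fun h => h.trans hE.symm.reachable⟩
  have hterm : ∀ i j, (a i - a j) ^ 2 * M i j ≤ 0 := by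
    intro i j
    by_cases hij : (E.Reachable u i ↔ E.Reachable u j)
    · simp [a, hij]
    have hne : i ≠ j := fun h => hij (h ▸ Iff.rfl)
    by_cases hadj : G.Adj i j
    · have := not_le.1 fun h => hij (hsame i j hadj h)
      exact mul_nonpos_of_nonneg_of_nonpos (sq_nonneg _) this.le
    · simp [hM i j hne hadj]
  have hxy' : (a x - a y) ^ 2 * M x y < 0 := by
    have hx : E.Reachable u x := hx
    have hy : ¬ E.Reachable u y := hy
    have := not_le.1 fun h => hy ((hsame x y hxy h).1 hx)
    simpa [a, hx, hy] using this
  have : ∑ i, ∑ j, (a i - a j) ^ 2 * M i j < 0 :=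
    Finset.sum_neg' (fun i _ => Finset.sum_nonpos fun j _ => hterm i j)
      ⟨x, Finset.mem_univ _, Finset.sum_neg' (fun j _ => hterm x j) ⟨y, Finset.mem_univ _, hxy'⟩⟩
  linarith [hpsd a]

open Finset in
/-- Grow a lifted set one adjacent vertex at a time: each new vertex widens the spread by at
most `δ`. -/
theorem Connected.exists_lift [Fintype V] (hG : G.Connected) {θ : V → ℝ} {p δ : ℝ}
    (hclose : ∀ i j, G.Adj i j → ∃ m : ℤ, |θ j - θ i + m * p| ≤ δ) :
    ∃ ψ : V → ℝ, (∀ j, ∃ m : ℤ, ψ j = θ j + m * p) ∧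
      ∀ i j, ψ i - ψ j ≤ (Fintype.card V - 1) * δ := by
  classical
  let Good (T : Finset V) : Prop := ∃ ψ : V → ℝ, (∀ j ∈ T, ∃ m : ℤ, ψ j = θ j + m * p) ∧
    ∀ i ∈ T, ∀ j ∈ T, ψ i - ψ j ≤ (#T - 1) * δ
  obtain ⟨r⟩ := hG.nonempty
  obtain ⟨T, hT, hmax⟩ := exists_max_image ({T | r ∈ T ∧ Good T} : Finset (Finset V)) card
    ⟨{r}, by simpa [Good] using ⟨θ, 0, by simp⟩⟩
  simp only [mem_filter, mem_univ, true_and] at hT hmax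
  obtain ⟨hrT, ψ, hψθ, hψ⟩ := hT
  suffices hTuniv : ∀ v, v ∈ T by
    refine ⟨ψ, fun j => hψθ j (hTuniv j), fun i j => ?_⟩
    simpa [eq_univ_of_forall hTuniv] using hψ i (hTuniv i) j (hTuniv j)
  intro v
  by_contra hv
  obtain ⟨x, hx, y, hy, hxy⟩ := hG.exists_adj_of_mem_of_notMem (S := ↑T) hrT hv
  replace hy : y ∉ T := hy
  obtain ⟨m, hm⟩ := hclose x y hxy
  obtain ⟨mx, hmx⟩ := hψθ x hx
  have hδ : 0 ≤ δ := (abs_nonneg _).trans hm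
  set ψ' := Function.update ψ y (θ y + (m + mx) * p)
  have hy' : |ψ' y - ψ x| ≤ δ := by
    simp only [ψ', Function.update_self]
    rw [hmx]; convert hm using 2; ring
  have hT' : ∀ j ∈ T, ψ' j = ψ j := fun j hj =>
    Function.update_of_ne (ne_of_mem_of_not_mem hj hy) _ _
  have hgood : Good (insert y T) := by
    refine ⟨ψ', fun j hj => ?_, fun i hi j hj => ?_⟩
    · rcases mem_insert.1 hj with rfl | hj
      · exact ⟨m + mx, by simp [ψ']⟩
      · rw [hT' j hj]; exact hψθ j hj
    · rw [card_insert_of_notMem hy]; push_cast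
      rcases mem_insert.1 hi with hi | hi <;> rcases mem_insert.1 hj with hj | hj
      · simp only [hi, hj, sub_self, add_sub_cancel_right]; positivity
      · have := hψ x hx j hj; rw [hi, hT' j hj]; linarith [(abs_le.1 hy').2]
      · have := hψ i hi x hx; rw [hj, hT' i hi]; linarith [(abs_le.1 hy').1]
      · rw [hT' i hi, hT' j hj]; linarith [hψ i hi j hj]
  have := hmax (insert y T) ⟨mem_insert_of_mem hrT, hgood⟩
  rw [card_insert_of_notMem hy] at this
  omega

theorem Connected.eq_of_sum_mul_sin_sub_eq_zero [Fintype V] (hG : G.Connected) {K : V → V → ℝ}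
    (hK : ∀ i j, 0 ≤ K i j) (hKadj : ∀ i j, G.Adj i j → 0 < K i j) {ψ : V → ℝ}
    (hψ : ∀ i j, ψ i - ψ j < π) (hcrit : ∀ i, ∑ j, K i j * sin (ψ j - ψ i) = 0) (i j : V) :
    ψ i = ψ j := by
  have := hG.nonempty
  obtain ⟨i₀, hi₀⟩ := Finite.exists_min ψ
  -- at a minimal angle every term of the balance equation is nonnegative, hence zero
  have hmin : ∀ k, ψ k = ψ i₀ := fun k => hG.mem_of_forall_adj_mem (S := {k | ψ k = ψ i₀}) rfl
    (fun x hx y hxy => by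
      have hx : ψ x = ψ i₀ := hx
      have hnonneg : ∀ z ∈ Finset.univ, 0 ≤ K x z * sin (ψ z - ψ x) := fun z _ =>
        mul_nonneg (hK x z) (sin_nonneg_of_nonneg_of_le_pi (by linarith [hi₀ z])
          (by linarith [hψ z x]))
      have hzero := (Finset.sum_eq_zero_iff_of_nonneg hnonneg).1 (hcrit x) y (Finset.mem_univ y)
      have hsin : sin (ψ y - ψ x) = 0 :=
        (mul_eq_zero.1 hzero).resolve_left (hKadj x y hxy).ne'
      have := (sin_eq_zero_iff_of_lt_of_lt (by linarith [hi₀ y, pi_pos]) (hψ y x)).1 hsin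
      show ψ y = ψ i₀
      linarith) k
  rw [hmin i, hmin j]

end SimpleGraph

theorem sum_sq_sub_mul_eq_two_mul {ι : Type*} [Fintype ι] {B : ι → ι → ℝ}
    (hB : ∀ i j, B j i = B i j) (a : ι → ℝ) :
    ∑ i, ∑ j, (a i - a j) ^ 2 * B i j = 2 * ∑ i, ∑ j, a i * (a i - a j) * B i j := by
  have hswap : ∑ i, ∑ j, a j * (a j - a i) * B i j = ∑ i, ∑ j, a i * (a i - a j) * B i j := by
    rw [Finset.sum_comm]; simp_rw [hB]
  rw [two_mul]
  nth_rewrite 2 [← hswap]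
  simp_rw [← Finset.sum_add_distrib]
  congr! 2 with i _ j _
  ring

section Circle

variable {ι : Type*}

def circleMatrix (θ : ι → ℝ) : Matrix (Fin 2) ι ℝ :=
  Matrix.of ![fun j => cos (θ j), fun j => sin (θ j)]

@[simp]
theorem circleMatrix_zero (θ : ι → ℝ) (j : ι) : circleMatrix θ 0 j = cos (θ j) := rfl

@[simp]
theorem circleMatrix_one (θ : ι → ℝ) (j : ι) : circleMatrix θ 1 j = sin (θ j) := rfl

@[simp]
theorem transpose_circleMatrix_mul_self_apply (θ : ι → ℝ) (i j : ι) :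
    ((circleMatrix θ)ᵀ * circleMatrix θ) i j = cos (θ i - θ j) := by
  simp [Matrix.mul_apply, Fin.sum_univ_two, cos_sub]

theorem exists_eq_circleMatrix [Fintype ι] {X : Matrix (Fin 2) ι ℝ} (hX : unitCols X) :
    ∃ θ, X = circleMatrix θ := by
  choose θ hθ using fun j => exists_cos_sin_eq (by simpa [Fin.sum_univ_two] using hX j)
  refine ⟨θ, Matrix.ext fun k j => ?_⟩
  fin_cases k
  exacts [(hθ j).1.symm, (hθ j).2.symm]

theorem circleMatrix_eq_of_forall_exists_int {θ ψ : ι → ℝ}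
    (h : ∀ j, ∃ m : ℤ, ψ j = θ j + m * (2 * π)) : circleMatrix ψ = circleMatrix θ := by
  ext k j
  obtain ⟨m, hm⟩ := h j
  fin_cases k <;> simp [hm]

theorem IsCritical.sum_mul_sin_eq_zero [Fintype ι] [DecidableEq ι] {W : Matrix ι ι ℝ} {θ : ι → ℝ}
    {d1 : ℝ → ℝ} (h : IsCritical W (circleMatrix θ) d1) (i : ι) :
    ∑ j, W j i * d1 (cos (θ j - θ i)) * sin (θ j - θ i) = 0 := by
  have h0 := congrFun (congrFun h 0) i
  have h1 := congrFun (congrFun h 1) i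
  simp only [Matrix.mul_apply, circleMatrix_zero, circleMatrix_one, Matrix.zero_apply] at h0 h1
  -- the cross product of `xᵢ` with `(X S)ᵢ`
  have : ∑ j, W j i * d1 (cos (θ j - θ i)) * sin (θ j - θ i) =
      sin (θ i) * ∑ j, cos (θ j) * Smat W (circleMatrix θ) d1 j i
        - cos (θ i) * ∑ j, sin (θ j) * Smat W (circleMatrix θ) d1 j i := by
    simp only [Finset.mul_sum, ← Finset.sum_sub_distrib]
    refine Finset.sum_congr rfl fun j _ => ?_
    by_cases hji : j = i
    · simp only [hji, sub_self, cos_zero, sin_zero, mul_zero]; ring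
    · simp only [Smat, ddiag, Amat, Matrix.sub_apply, Matrix.diagonal_apply_ne _ hji,
        Matrix.hadamard_apply, Matrix.map_apply, transpose_circleMatrix_mul_self_apply, sin_sub]
      ring
  rw [this, h0, h1]; ring

def circleTangent (θ a : ι → ℝ) : Matrix (Fin 2) ι ℝ :=
  Matrix.of ![fun j => -(a j * sin (θ j)), fun j => a j * cos (θ j)]

section Gram

variable (θ a : ι → ℝ) (i j : ι)

@[simp]
theorem circleTangent_zero : circleTangent θ a 0 j = -(a j * sin (θ j)) := rfl

@[simp]
theorem circleTangent_one : circleTangent θ a 1 j = a j * cos (θ j) := rfl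

@[simp]
theorem transpose_circleMatrix_mul_circleTangent_apply :
    ((circleMatrix θ)ᵀ * circleTangent θ a) i j = a j * sin (θ i - θ j) := by
  simp only [Matrix.mul_apply, Fin.sum_univ_two, Matrix.transpose_apply, circleMatrix_zero,
    circleMatrix_one, circleTangent_zero, circleTangent_one, sin_sub]
  ring

@[simp]
theorem transpose_circleTangent_mul_circleMatrix_apply :
    ((circleTangent θ a)ᵀ * circleMatrix θ) i j = -(a i * sin (θ i - θ j)) := by
  simp only [Matrix.mul_apply, Fin.sum_univ_two, Matrix.transpose_apply, circleMatrix_zero,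
    circleMatrix_one, circleTangent_zero, circleTangent_one, sin_sub]
  ring

@[simp]
theorem transpose_circleTangent_mul_self_apply :
    ((circleTangent θ a)ᵀ * circleTangent θ a) i j = a i * a j * cos (θ i - θ j) := by
  simp only [Matrix.mul_apply, Fin.sum_univ_two, Matrix.transpose_apply, circleTangent_zero,
    circleTangent_one, cos_sub]
  ring

end Gram

/-- In the tangent direction `ẋⱼ = aⱼ xⱼ^⊥` the Hessian form equals `-½ ∑ (aᵢ - aⱼ)² mᵢⱼ`. -/
theorem HessNegSemidef.sum_sq_sub_mul_Mmat_nonneg [Fintype ι] [DecidableEq ι]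
    {W : Matrix ι ι ℝ} (hW : W.IsSymm) {θ : ι → ℝ} {d1 d2 : ℝ → ℝ}
    (h : HessNegSemidef W (circleMatrix θ) d1 d2) (a : ι → ℝ) :
    0 ≤ ∑ i, ∑ j, (a i - a j) ^ 2 * Mmat W (circleMatrix θ) d1 d2 i j := by
  have hWs : ∀ i j, W j i = W i j := fun i j => hW.apply i j
  have hB : ∀ i j, cos (θ j - θ i) * W j i * d1 (cos (θ j - θ i))
      = cos (θ i - θ j) * W i j * d1 (cos (θ i - θ j)) := fun i j => by rw [hWs, cos_sub_comm]
  have h1 : frob ((circleTangent θ a)ᵀ * circleTangent θ a) (Smat W (circleMatrix θ) d1)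
      = ∑ i, ∑ j, a i * (a i - a j) * (cos (θ i - θ j) * W i j * d1 (cos (θ i - θ j))) := by
    simp only [frob, Smat, ddiag, Amat, Matrix.sub_apply, Matrix.diagonal_apply,
      Matrix.hadamard_apply, Matrix.map_apply, transpose_circleTangent_mul_self_apply,
      transpose_circleMatrix_mul_self_apply]
    refine Finset.sum_congr rfl fun i _ => ?_
    simp only [Matrix.mul_apply (M := (circleMatrix θ)ᵀ * circleMatrix θ),
      transpose_circleMatrix_mul_self_apply, Matrix.hadamard_apply, Matrix.map_apply, mul_sub,
      mul_ite, mul_zero, Finset.sum_sub_distrib, Finset.sum_ite_eq, Finset.mem_univ, if_true,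
      sub_self, cos_zero, Finset.mul_sum]
    rw [← Finset.sum_sub_distrib]
    refine Finset.sum_congr rfl fun j _ => ?_
    rw [hWs i j, cos_sub_comm (θ j)]
    ring
  have h2 : frob (((circleMatrix θ)ᵀ * circleTangent θ a
        + (circleTangent θ a)ᵀ * circleMatrix θ).map fun t => t ^ 2)
        (Matrix.hadamard W (((circleMatrix θ)ᵀ * circleMatrix θ).map d2))
      = ∑ i, ∑ j, (a i - a j) ^ 2 * ((1 - cos (θ i - θ j) ^ 2) * W i j * d2 (cos (θ i - θ j))) := by
    simp only [frob, Matrix.map_apply, Matrix.add_apply, Matrix.hadamard_apply, ← sin_sq,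
      transpose_circleMatrix_mul_circleTangent_apply,
      transpose_circleTangent_mul_circleMatrix_apply, transpose_circleMatrix_mul_self_apply]
    congr! 2 with i _ j _
    ring
  have hM : ∑ i, ∑ j, (a i - a j) ^ 2 * Mmat W (circleMatrix θ) d1 d2 i j
      = ∑ i, ∑ j, (a i - a j) ^ 2 * (cos (θ i - θ j) * W i j * d1 (cos (θ i - θ j)))
        - ∑ i, ∑ j, (a i - a j) ^ 2 *
            ((1 - cos (θ i - θ j) ^ 2) * W i j * d2 (cos (θ i - θ j))) := by
    simp only [← Finset.sum_sub_distrib, Mmat, hfun, Matrix.of_apply,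
      transpose_circleMatrix_mul_self_apply]
    congr! 2 with i _ j _
    ring
  have := h (circleTangent θ a) (by simp)
  rw [h1, h2] at this
  rw [hM, sum_sq_sub_mul_eq_two_mul hB]
  linarith

theorem Mmat_eq_zero_of_not_adj [Fintype ι] {d : ℕ} {W : Matrix ι ι ℝ}
    (hW : ∀ i j, 0 ≤ W i j) (X : Matrix (Fin d) ι ℝ) (d1 d2 : ℝ → ℝ) {i j : ι} (hij : i ≠ j)
    (hadj : ¬ (SimpleGraph.fromRel fun i j => 0 < W i j).Adj i j) : Mmat W X d1 d2 i j = 0 := by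
  have : W i j = 0 := (hW i j).antisymm' (not_lt.1 fun h => hadj ⟨hij, Or.inl h⟩)
  simp [Mmat, this]

theorem Mmat_circleMatrix_comm [Fintype ι] {W : Matrix ι ι ℝ} (hW : W.IsSymm)
    (θ : ι → ℝ) (d1 d2 : ℝ → ℝ) (i j : ι) :
    Mmat W (circleMatrix θ) d1 d2 j i = Mmat W (circleMatrix θ) d1 d2 i j := by
  simp only [Mmat, Matrix.of_apply, transpose_circleMatrix_mul_self_apply, hW.apply i j,
    cos_sub_comm (θ j)]

theorem exists_abs_add_int_mul_two_pi_lt_of_Mmat_nonneg [Fintype ι] {W : Matrix ι ι ℝ}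
    {θ : ι → ℝ} {δ β : ℝ} (hδ : 0 < δ) (hβ : 1 / δ ^ 2 ≤ β) {i j : ι}
    (hW : 0 < W i j)
    (hM : 0 ≤ Mmat W (circleMatrix θ) (fun t => exp (β * t)) (fun t => β * exp (β * t)) i j) :
    ∃ m : ℤ, |θ j - θ i + m * (2 * π)| < δ := by
  simp only [Mmat, hfun, Matrix.of_apply, transpose_circleMatrix_mul_self_apply] at hM
  have : 0 ≤ exp (β * cos (θ i - θ j)) * (cos (θ i - θ j) - β * (1 - cos (θ i - θ j) ^ 2)) := by
    rw [← mul_nonneg_iff_of_pos_left hW]; linarith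
  rw [mul_nonneg_iff_of_pos_left (exp_pos _), cos_sub_comm] at this
  exact exists_abs_add_int_mul_two_pi_lt hδ hβ (by rw [sin_sq]; linarith)

end Circle

theorem deriv_exp_mul_div {β : ℝ} (hβ : β ≠ 0) :
    deriv (fun t => exp (β * t) / β) = fun t => exp (β * t) := by
  funext t
  rw [(((hasDerivAt_id' t).const_mul β).exp.div_const β).deriv]
  field_simp

theorem deriv_exp_mul (β : ℝ) : deriv (fun t => exp (β * t)) = fun t => β * exp (β * t) := by
  funext t
  rw [((hasDerivAt_id' t).const_mul β).exp.deriv]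
  simp [mul_comm]

/-- Corollary 3, large `β`: on the circle with a connected graph and
`φ(t) = e^{βt}/β`, `β ≥ n²/π²`, second-order critical points are synchronized. -/
theorem synchronization_circle_exponential_large_beta
    {n : ℕ} (hn : 1 ≤ n)
    (β : ℝ) (hβ : (n : ℝ) ^ 2 / Real.pi ^ 2 ≤ β)
    (W : Matrix (Fin n) (Fin n) ℝ) (hWsymm : W.IsSymm) (hWnonneg : ∀ i j, 0 ≤ W i j)
    (hconn : ConnectedW W)
    (X : Matrix (Fin 2) (Fin n) ℝ) (hX : unitCols X)
    (hcrit : IsCritical W X (deriv fun t => Real.exp (β * t) / β))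
    (hhess : HessNegSemidef W X (deriv fun t => Real.exp (β * t) / β)
      (deriv (deriv fun t => Real.exp (β * t) / β))) :
    ∀ j j' : Fin n, ∀ i, X i j = X i j' := by
  have hn₀ : (0 : ℝ) < n := by exact_mod_cast hn
  have hβ₀ : 0 < β := lt_of_lt_of_le (by positivity) hβ
  rw [deriv_exp_mul_div hβ₀.ne', deriv_exp_mul] at hhess
  rw [deriv_exp_mul_div hβ₀.ne'] at hcrit
  obtain ⟨θ, rfl⟩ := exists_eq_circleMatrix hX
  have hWadj (i j : Fin n) := SimpleGraph.fromRel_adj_iff_of_symm (r := fun i j => 0 < W i j)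
    (fun i j h => (hWsymm.apply j i).symm ▸ h) (v := i) (w := j)
  have hE := hconn.connected_fromRel_nonneg
    (fun i j => Mmat_eq_zero_of_not_adj hWnonneg _ _ _) (hhess.sum_sq_sub_mul_Mmat_nonneg hWsymm)
  obtain ⟨ψ, hψθ, hψ⟩ := hE.exists_lift (δ := π / n) fun i j hij => by
    obtain ⟨-, hWij, hMij⟩ := (SimpleGraph.fromRel_adj_iff_of_symm (fun i j h =>
      ⟨h.1.symm, (Mmat_circleMatrix_comm hWsymm θ _ _ i j).symm ▸ h.2⟩)).1 hij
    obtain ⟨m, hm⟩ := exists_abs_add_int_mul_two_pi_lt_of_Mmat_nonneg (div_pos pi_pos hn₀)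
      (by rwa [div_pow, one_div_div]) ((hWadj i j).1 hWij).2 hMij
    exact ⟨m, hm.le⟩
  have hspread : ((Fintype.card (Fin n) : ℝ) - 1) * (π / n) < π := by
    rw [Fintype.card_fin, sub_mul, one_mul, mul_div_cancel₀ _ hn₀.ne']
    linarith [div_pos pi_pos hn₀]
  rw [← circleMatrix_eq_of_forall_exists_int hψθ] at hcrit ⊢
  have hconst := hconn.eq_of_sum_mul_sin_sub_eq_zero
    (K := fun i j => W j i * exp (β * cos (ψ j - ψ i)))
    (fun i j => mul_nonneg (hWnonneg j i) (exp_pos _).le)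
    (fun i j hij => mul_pos ((hWadj j i).1 hij.symm).2 (exp_pos _))
    (fun i j => (hψ i j).trans_lt hspread) hcrit.sum_mul_sin_eq_zero
  intro j j' k
  fin_cases k <;> simp [hconst j j']
end
end

section
/- Let n ≥ 5 and let X ∈ ℝ^{2×n} be the regular n-gon: x_i = (cos θ_i, sin θ_i) with θ_i = 2π(i−1)/n. Fix τ ∈ [0, cos(2π/5)) such that τ ∉ {cos(2π(i−1)/n) : i = 1,…,n}, and consider φ(t) = max{0, t − τ} with W = 1_n 1_nᵀ. Then X is critical for f (the first-order condition X·ddiag(XᵀXA) = XA holds, where A has entries φ'(x_iᵀx_j) with φ'(t) = 1 if t > τ and φ'(t) = 0 if t < τ), and the Laplacian L(M) with m_ij = x_iᵀx_j·φ'(x_iᵀx_j) is positive semidefinite with kernel exactly span(1_n) (i.e., the Hessian of f at X is negative definite modulo the trivial rotational zero mode). -/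
open Matrix

noncomputable section

/-!
The Gram matrix of the regular `n`-gon is `cos (θᵢ - θⱼ)`. For a point `xⱼ` of the circle,
`xₖ - ⟨xⱼ, xₖ⟩ xⱼ = sin (θₖ - θⱼ) · xⱼ^⊥`, so criticality reduces to
`∑ₖ sin (θⱼ - θₖ) φ'(cos (θⱼ - θₖ)) = 0`: the differences `θⱼ - θₖ` run, modulo `2π`, over all
`n`-gon angles, a set invariant under negation, and the summand is odd.

With `φ'' = 0` the Laplacian weights are `mᵢⱼ = t φ'(t) ≥ 0` (as `τ ≥ 0`), so `L(M)` is positive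
semidefinite with quadratic form `½ ∑ mᵢⱼ (αᵢ - αⱼ)²`. Neighbouring vertices have
`t = cos (2π/n) ≥ cos (2π/5) > τ`, so the positive weights contain a Hamiltonian path; the weight
graph is connected and the kernel consists of the constant vectors.
-/

open Finset Function

section Laplacian

variable {ι : Type*} [Fintype ι] [DecidableEq ι] {M : Matrix ι ι ℝ}

lemma lap_mulVec_apply (M : Matrix ι ι ℝ) (x : ι → ℝ) (i : ι) :
    (lap M *ᵥ x) i = ∑ j, M i j * (x i - x j) := by
  rw [lap, sub_mulVec, Pi.sub_apply, mulVec_diagonal]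
  simp only [mulVec, dotProduct, mul_sub, sum_sub_distrib, sum_mul]

lemma dotProduct_lap_mulVec (hM : M.IsSymm) (x : ι → ℝ) :
    x ⬝ᵥ lap M *ᵥ x = (1 / 2) * ∑ i, ∑ j, M i j * (x i - x j) ^ 2 := by
  have hleft : x ⬝ᵥ lap M *ᵥ x = ∑ i, ∑ j, M i j * (x i * (x i - x j)) := by
    simp only [dotProduct, lap_mulVec_apply, mul_sum]
    exact sum_congr rfl fun i _ => sum_congr rfl fun j _ => by ring
  have hright : x ⬝ᵥ lap M *ᵥ x = ∑ i, ∑ j, M i j * (-x j * (x i - x j)) := by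
    rw [hleft, sum_comm]
    exact sum_congr rfl fun i _ => sum_congr rfl fun j _ => by rw [hM.apply]; ring
  have hsum : ∑ i, ∑ j, M i j * (x i - x j) ^ 2 = 2 * (x ⬝ᵥ lap M *ᵥ x) := by
    rw [two_mul]
    nth_rw 1 [hleft]
    rw [hright, ← sum_add_distrib]
    exact sum_congr rfl fun i _ => by rw [← sum_add_distrib]; exact sum_congr rfl fun j _ => by ring
  linarith

lemma posSemidef_lap (hM : M.IsSymm) (hnn : ∀ i j, 0 ≤ M i j) : (lap M).PosSemidef := by
  refine .of_dotProduct_mulVec_nonneg ?_ fun x => ?_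
  · simp [isHermitian_iff_isSymm, IsSymm, lap, hM.eq]
  · rw [star_trivial, dotProduct_lap_mulVec hM]
    have := sum_nonneg fun i (_ : i ∈ univ) => sum_nonneg fun j (_ : j ∈ univ) =>
      mul_nonneg (hnn i j) (sq_nonneg (x i - x j))
    linarith

lemma lap_mulVec_eq_zero_iff (hM : M.IsSymm) (hnn : ∀ i j, 0 ≤ M i j) {x : ι → ℝ} :
    lap M *ᵥ x = 0 ↔ ∀ i j, 0 < M i j → x i = x j := by
  constructor
  · intro h i j hij
    have hterm_nonneg : ∀ i j, 0 ≤ M i j * (x i - x j) ^ 2 := fun i j =>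
      mul_nonneg (hnn i j) (sq_nonneg _)
    have hsum : ∑ i, ∑ j, M i j * (x i - x j) ^ 2 = 0 := by
      have := dotProduct_lap_mulVec hM x
      rw [h, dotProduct_zero] at this
      linarith
    rw [sum_eq_zero_iff_of_nonneg fun i _ => sum_nonneg fun j _ => hterm_nonneg i j] at hsum
    have hterm := (sum_eq_zero_iff_of_nonneg fun j _ => hterm_nonneg i j).mp
      (hsum i (mem_univ i)) j (mem_univ j)
    rw [mul_eq_zero, sq_eq_zero_iff, sub_eq_zero] at hterm
    exact hterm.resolve_left hij.ne'
  · intro h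
    funext i
    rw [lap_mulVec_apply, Pi.zero_apply]
    refine sum_eq_zero fun j _ => ?_
    rcases (hnn i j).lt_or_eq with hij | hij
    · rw [h i j hij, sub_self, mul_zero]
    · rw [← hij, zero_mul]

lemma kernelIsConst_lap (hM : M.IsSymm) (hnn : ∀ i j, 0 ≤ M i j) (hconn : ConnectedW M) :
    KernelIsConst (lap M) := by
  intro x
  rw [lap_mulVec_eq_zero_iff hM hnn]
  constructor
  · intro h
    obtain ⟨i₀⟩ := hconn.nonempty
    refine ⟨x i₀, fun k => ?_⟩
    obtain ⟨w⟩ := hconn.preconnected k i₀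
    induction w with
    | nil => rfl
    | cons hadj _ ih =>
      obtain ⟨-, hpos | hpos⟩ := (SimpleGraph.fromRel_adj _ _ _).mp hadj
      · exact (h _ _ hpos).trans ih
      · exact (h _ _ hpos).symm.trans ih
  · rintro ⟨c, hc⟩ i j -
    rw [hc, hc]

end Laplacian

lemma connectedW_of_pos_succ {n : ℕ} [NeZero n] {M : Matrix (Fin n) (Fin n) ℝ}
    (h : ∀ i j : Fin n, (i : ℕ) + 1 = j → 0 < M i j) : ConnectedW M := by
  obtain ⟨m, rfl⟩ := Nat.exists_eq_succ_of_ne_zero (NeZero.ne n)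
  refine (SimpleGraph.pathGraph_connected m).mono fun u v huv => ?_
  rw [SimpleGraph.pathGraph_adj] at huv
  rw [SimpleGraph.fromRel_adj]
  exact ⟨Fin.ne_of_val_ne (by omega), huv.imp (h u v) (h v u)⟩

lemma isSymm_Mmat {ι : Type*} [Fintype ι] {d : ℕ} {W : Matrix ι ι ℝ} (hW : W.IsSymm)
    (X : Matrix (Fin d) ι ℝ) (d1 d2 : ℝ → ℝ) : (Mmat W X d1 d2).IsSymm :=
  IsSymm.ext fun i j => by simp only [Mmat, of_apply, hW.apply, mul_apply, transpose_apply, mul_comm]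

lemma mul_Smat_apply {ι : Type*} [Fintype ι] [DecidableEq ι] {d : ℕ} (W : Matrix ι ι ℝ)
    (X : Matrix (Fin d) ι ℝ) (d1 : ℝ → ℝ) (a : Fin d) (j : ι) :
    (X * Smat W X d1) a j = ∑ k, (X a j * (Xᵀ * X) j k - X a k) * Amat W X d1 k j := by
  rw [mul_apply]
  simp only [Smat, ddiag, Matrix.sub_apply, diagonal_apply, mul_sub, sum_sub_distrib, mul_ite,
    mul_zero, sum_ite_eq', mem_univ, if_true]
  rw [mul_apply]
  simp only [sub_mul, sum_sub_distrib, mul_sum, mul_assoc]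

section ReLU

variable {τ : ℝ}

lemma hfun_step_nonneg (hτ : 0 ≤ τ) (t : ℝ) :
    0 ≤ hfun (fun t => if τ < t then 1 else 0) (fun _ => 0) t := by
  simp only [hfun, mul_zero, sub_zero, mul_ite, mul_one]
  split_ifs with ht <;> linarith

lemma hfun_step_pos (hτ : 0 ≤ τ) {t : ℝ} (ht : τ < t) :
    0 < hfun (fun t => if τ < t then 1 else 0) (fun _ => 0) t := by
  simp only [hfun, mul_zero, sub_zero, if_pos ht, mul_one]
  linarith

end ReLU

section RegularPolygon

variable {n : ℕ}

def ngonAngle (n : ℕ) (j : Fin n) : ℝ := 2 * Real.pi * (j : ℝ) / (n : ℝ)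

lemma ngon_apply_zero (j : Fin n) : ngon n 0 j = Real.cos (ngonAngle n j) := by
  simp [ngon, ngonAngle]

lemma ngon_apply_one (j : Fin n) : ngon n 1 j = Real.sin (ngonAngle n j) := by
  simp [ngon, ngonAngle]

lemma ngon_transpose_mul_self_apply (i k : Fin n) :
    ((ngon n)ᵀ * ngon n) i k = Real.cos (ngonAngle n i - ngonAngle n k) := by
  simp [mul_apply, Fin.sum_univ_two, ngon_apply_zero, ngon_apply_one, Real.cos_sub]

lemma ngon_transpose_mul_self_of_val_succ {i j : Fin n} (h : (i : ℕ) + 1 = j) :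
    ((ngon n)ᵀ * ngon n) i j = Real.cos (2 * Real.pi / n) := by
  have hn : (n : ℝ) ≠ 0 := Nat.cast_ne_zero.mpr (by omega)
  rw [ngon_transpose_mul_self_apply, ← Real.cos_neg]
  congr 1
  simp only [ngonAngle, ← h, Nat.cast_add, Nat.cast_one]
  field_simp
  ring

lemma Function.Periodic.apply_ngonAngle_sub [NeZero n] {g : ℝ → ℝ}
    (hg : Periodic g (2 * Real.pi)) (i k : Fin n) :
    g (ngonAngle n i - ngonAngle n k) = g (ngonAngle n (i - k)) := by
  have hn : (n : ℝ) ≠ 0 := Nat.cast_ne_zero.mpr (NeZero.ne n)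
  rcases le_or_gt k i with hki | hik
  · congr 1
    simp only [ngonAngle, Fin.coe_sub_iff_le.mpr hki, Nat.cast_sub (Fin.le_iff_val_le_val.mp hki)]
    ring
  · have hshift : ngonAngle n (i - k) = ngonAngle n i - ngonAngle n k + 2 * Real.pi := by
      simp only [ngonAngle, Fin.coe_sub_iff_lt.mpr hik, Nat.cast_sub (by omega : (k : ℕ) ≤ n + i),
        Nat.cast_add]
      field_simp
      ring
    rw [hshift, hg]

lemma sum_ngonAngle_sub_eq_zero [NeZero n] {g : ℝ → ℝ} (hper : Periodic g (2 * Real.pi))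
    (hodd : g.Odd) (j : Fin n) : ∑ k, g (ngonAngle n j - ngonAngle n k) = 0 := by
  set S := ∑ m, g (ngonAngle n m)
  have hneg : ∀ m : Fin n, g (ngonAngle n (-m)) = -g (ngonAngle n m) := fun m => by
    rw [← zero_sub, ← hper.apply_ngonAngle_sub, ← hodd]
    simp [ngonAngle]
  have hS : S = -S := calc
    S = ∑ m, g (ngonAngle n (-m)) := (Equiv.sum_comp (Equiv.neg _) _).symm
    _ = -S := by simp only [hneg, sum_neg_distrib, S]
  calc ∑ k, g (ngonAngle n j - ngonAngle n k)
      = ∑ k, g (ngonAngle n (j - k)) := sum_congr rfl fun k _ => hper.apply_ngonAngle_sub j k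
    _ = S := Equiv.sum_comp (Equiv.subLeft j) fun m => g (ngonAngle n m)
    _ = 0 := by linarith

lemma ngon_mul_sub_ngon (a : Fin 2) (j k : Fin n) :
    ngon n a j * ((ngon n)ᵀ * ngon n) j k - ngon n a k
      = ![-Real.sin (ngonAngle n j), Real.cos (ngonAngle n j)] a
        * Real.sin (ngonAngle n j - ngonAngle n k) := by
  rw [ngon_transpose_mul_self_apply, Real.cos_sub, Real.sin_sub]
  fin_cases a
  · simp only [Fin.zero_eta, ngon_apply_zero, Matrix.cons_val_zero]
    linear_combination Real.cos (ngonAngle n k) * Real.sin_sq_add_cos_sq (ngonAngle n j)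
  · simp only [Fin.mk_one, ngon_apply_one, Matrix.cons_val_one, Matrix.cons_val_zero]
    linear_combination Real.sin (ngonAngle n k) * Real.sin_sq_add_cos_sq (ngonAngle n j)

lemma isCritical_ngon [NeZero n] (d1 : ℝ → ℝ) :
    IsCritical (Matrix.of fun _ _ => (1 : ℝ)) (ngon n) d1 := by
  ext a j
  have hA : ∀ k, Amat (Matrix.of fun _ _ => (1 : ℝ)) (ngon n) d1 k j
      = d1 (Real.cos (ngonAngle n j - ngonAngle n k)) := fun k => by
    simp [Amat, ngon_transpose_mul_self_apply, ← Real.cos_neg (ngonAngle n k - _)]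
  simp only [mul_Smat_apply, ngon_mul_sub_ngon, hA, mul_assoc, ← mul_sum, Matrix.zero_apply]
  rw [sum_ngonAngle_sub_eq_zero (g := fun t => Real.sin t * d1 (Real.cos t)), mul_zero]
  · exact fun t => by simp only [Real.sin_add_two_pi, Real.cos_add_two_pi]
  · exact fun t => by simp only [Real.sin_neg, Real.cos_neg, neg_mul]

lemma cos_two_pi_div_le_cos_two_pi_div {m n : ℕ} (hm : 2 ≤ m) (hmn : m ≤ n) :
    Real.cos (2 * Real.pi / m) ≤ Real.cos (2 * Real.pi / n) := by
  have hm' : (2 : ℝ) ≤ m := by exact_mod_cast hm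
  have hmn' : (m : ℝ) ≤ n := by exact_mod_cast hmn
  apply Real.cos_le_cos_of_nonneg_of_le_pi (by positivity)
  · rw [div_le_iff₀ (by positivity)]
    nlinarith [Real.pi_pos]
  · gcongr

end RegularPolygon

theorem ngon_spurious_for_relu_general
    {n : ℕ} (hn : 5 ≤ n)
    (τ : ℝ) (hτ0 : 0 ≤ τ) (hτ1 : τ < Real.cos (2 * Real.pi / 5)) :
    IsCritical (Matrix.of fun _ _ => (1 : ℝ)) (ngon n)
      (fun t => if τ < t then (1 : ℝ) else 0) ∧
    (lap (Mmat (Matrix.of fun _ _ => (1 : ℝ)) (ngon n)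
      (fun t => if τ < t then (1 : ℝ) else 0) (fun _ => 0))).PosSemidef ∧
    KernelIsConst (lap (Mmat (Matrix.of fun _ _ => (1 : ℝ)) (ngon n)
      (fun t => if τ < t then (1 : ℝ) else 0) (fun _ => 0))) := by
  have : NeZero n := ⟨by omega⟩
  have hτn : τ < Real.cos (2 * Real.pi / n) :=
    hτ1.trans_le (by exact_mod_cast cos_two_pi_div_le_cos_two_pi_div (by norm_num) hn)
  set M := Mmat (Matrix.of fun _ _ => (1 : ℝ)) (ngon n)
    (fun t => if τ < t then (1 : ℝ) else 0) (fun _ => 0)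
  have hsymm : M.IsSymm := isSymm_Mmat (IsSymm.ext fun _ _ => rfl) _ _ _
  have hnn : ∀ i j, 0 ≤ M i j := fun i j => by
    simpa [M, Mmat] using hfun_step_nonneg hτ0 _
  have hconn : ConnectedW M := connectedW_of_pos_succ fun i j hij => by
    simpa [M, Mmat, ngon_transpose_mul_self_of_val_succ hij] using hfun_step_pos hτ0 hτn
  exact ⟨isCritical_ngon _, posSemidef_lap hsymm hnn, kernelIsConst_lap hsymm hnn hconn⟩

/-- Lemma 3: for the ReLU `φ(t) = max{0, t − τ}` (so `φ'(t) = 1` if `t > τ`,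
`0` if `t < τ`, `φ'' = 0`) with `τ ∈ [0, cos(2π/5))` avoiding the inner products of the
regular `n`-gon, the regular `n`-gon is critical for `f` with `W = 1 1ᵀ`, and the Laplacian
`L(M)`, `m_ij = x_iᵀx_j·φ'(x_iᵀx_j)`, is positive semidefinite with kernel span(1). -/
theorem ngon_spurious_for_relu
    {n : ℕ} (hn : 5 ≤ n)
    (τ : ℝ) (hτ0 : 0 ≤ τ) (hτ1 : τ < Real.cos (2 * Real.pi / 5))
    (hτne : ∀ i : Fin n, τ ≠ Real.cos (2 * Real.pi * (i : ℝ) / (n : ℝ))) :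
    IsCritical (Matrix.of fun _ _ => (1 : ℝ)) (ngon n)
      (fun t => if τ < t then (1 : ℝ) else 0) ∧
    (lap (Mmat (Matrix.of fun _ _ => (1 : ℝ)) (ngon n)
      (fun t => if τ < t then (1 : ℝ) else 0) (fun _ => 0))).PosSemidef ∧
    KernelIsConst (lap (Mmat (Matrix.of fun _ _ => (1 : ℝ)) (ngon n)
      (fun t => if τ < t then (1 : ℝ) else 0) (fun _ => 0))) :=
  ngon_spurious_for_relu_general hn τ hτ0 hτ1
end
end
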